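/- Let G be a finite simple graph in which every vertex has degree at least δ, where δ ≥ 1, let J be a δ-regular spanning subgraph of G with h edges, and let uv be an edge of J. Writing Δ(w) = deg_G(w) − δ, the probability that J ⊆ G_ω, e_{k(ω)} = uv, and both u and v have degree exactly δ in G_ω equals (h−1)! · (Δ(u)+Δ(v))! / (h + Δ(u) + Δ(v))!. -/

import Mathlib

/-!
Let `B` be the edges of `J` other than `uv` and `A` the edges of `G` outside `J` at `u` or `v`.
The event holds exactly when every edge of `B` precedes `uv` and `uv` precedes every edge of `A`:
then all of `J` is present once `uv` arrives, just before which `u` still had degree below `δ`,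
and no further edge at `u` or `v` has appeared. Let the symmetric group of the
`|B| + |A| + 1 = h + Δ(u) + Δ(v)` edges involved permute them among their own positions. This
action on orderings is free, and in every orbit exactly `|B|! |A|!` orderings have the required
relative order.
-/

open Finset

/-- The degree of a vertex `v` in the graph whose edge set is the finite set `s`
of edges (elements of `Sym2 V`). -/
def degIn {V : Type*} [DecidableEq V] (s : Finset (Sym2 V)) (v : V) : ℕ :=
  (s.filter (fun e => v ∈ e)).card

/-- Given an ordering `ω` of a finite set `s` of edges, the set consisting of the
first `i` edges `e_{ω(1)}, …, e_{ω(i)}`. -/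
def prefixEdges {V : Type*} [DecidableEq V] {s : Finset (Sym2 V)}
    (ω : Fin s.card ≃ {e : Sym2 V // e ∈ s}) (i : ℕ) : Finset (Sym2 V) :=
  (Finset.univ.filter (fun j : Fin s.card => (j : ℕ) < i)).image (fun j => (ω j : Sym2 V))

/-- `k(ω)`: the least `i` such that every vertex has degree at least `δ` in the graph
formed by the first `i` edges of the ordering `ω`. -/
noncomputable def stopIndex {V : Type*} [Fintype V] [DecidableEq V] (δ : ℕ)
    {s : Finset (Sym2 V)} (ω : Fin s.card ≃ {e : Sym2 V // e ∈ s}) : ℕ :=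
  sInf {i | ∀ v : V, δ ≤ degIn (prefixEdges ω i) v}

/-- The edge set of `G_ω`, i.e. the first `k(ω)` edges of the ordering `ω`. -/
noncomputable def finalEdges {V : Type*} [Fintype V] [DecidableEq V] (δ : ℕ)
    {s : Finset (Sym2 V)} (ω : Fin s.card ≃ {e : Sym2 V // e ∈ s}) : Finset (Sym2 V) :=
  prefixEdges ω (stopIndex δ ω)

/-- A graph is `δ`-regular: every vertex has exactly `δ` neighbours. -/
def regOfDegree {V : Type*} (J : SimpleGraph V) (δ : ℕ) : Prop :=
  ∀ v : V, (J.neighborSet v).ncard = δ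

/-- `e` is the last edge `e_{k(ω)}` of `G_ω`: it belongs to the first `k(ω)` edges but
not to the first `k(ω) − 1` edges. -/
noncomputable def lastEdgeIs {V : Type*} [Fintype V] [DecidableEq V] (δ : ℕ)
    {s : Finset (Sym2 V)} (ω : Fin s.card ≃ {e : Sym2 V // e ∈ s}) (e : Sym2 V) : Prop :=
  e ∈ prefixEdges ω (stopIndex δ ω) ∧ e ∉ prefixEdges ω (stopIndex δ ω - 1)

open Function Equiv
open scoped Nat

@[to_additive]
lemma prod_univ_ordering {M : Type*} [CommMonoid M] (f : Ordering → M) :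
    ∏ o, f o = f .lt * f .eq * f .gt := by
  rw [Finset.univ]
  simp [Fintype.elems, mul_assoc]

lemma card_subtype_coe_mem {α : Type*} [DecidableEq α] {T S : Finset α} (h : S ⊆ T) :
    Fintype.card {w : T // (w : α) ∈ S} = #S :=
  (Fintype.card_congr (subtypeSubtypeEquivSubtype fun hw => h hw)).trans (Fintype.card_coe S)

section Rank
variable {τ β : Type*} [Fintype τ] [LinearOrder β] {key : τ → β}

def rankBy (key : τ → β) (w : τ) : ℕ := #{w' | key w' < key w}

lemma rankBy_lt_rankBy_iff {a b : τ} : rankBy key a < rankBy key b ↔ key a < key b := by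
  refine ⟨fun h => not_le.1 fun hba => h.not_ge ?_, fun h => card_lt_card ?_⟩
  · exact card_le_card fun w hw => by simp only [mem_filter, mem_univ, true_and] at hw ⊢; order
  · refine ⟨fun w hw => ?_, fun hsub => ?_⟩
    · simp only [mem_filter, mem_univ, true_and] at hw ⊢; order
    · simpa using hsub (x := a) (by simpa using h)

lemma compare_rankBy (hkey : Injective key) (a b : τ) :
    compare (rankBy key a) (rankBy key b) = compare (key a) (key b) := by
  rcases lt_trichotomy (key a) (key b) with h | h | h
  · rw [compare_lt_iff_lt.2 h, compare_lt_iff_lt, rankBy_lt_rankBy_iff]; exact h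
  · rw [hkey h, compare_eq_iff_eq.2 rfl, compare_eq_iff_eq.2 rfl]
  · rw [compare_gt_iff_gt.2 h, compare_gt_iff_gt, rankBy_lt_rankBy_iff]; exact h

lemma rankBy_lt_card (a : τ) : rankBy key a < Fintype.card τ :=
  card_lt_univ_of_notMem (s := {w' | key w' < key a}) (x := a) (by simp)

noncomputable def rankEquiv (hkey : Injective key) : τ ≃ Fin (Fintype.card τ) :=
  Equiv.ofBijective (fun w => ⟨rankBy key w, rankBy_lt_card w⟩) <|
    (Fintype.bijective_iff_injective_and_card _).2
      ⟨fun a b h => hkey.eq_iff.1 <| by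
          simpa [compare_rankBy hkey] using
            congrArg (compare · (rankBy key b)) (Fin.val_eq_of_eq h),
        (Fintype.card_fin _).symm⟩

lemma card_fiber_gt (f : τ → Ordering) :
    Fintype.card {w // f w = .gt} =
      Fintype.card τ - Fintype.card {w // f w = .lt} - Fintype.card {w // f w = .eq} := by
  have h := Fintype.card_congr (Equiv.sigmaFiberEquiv f)
  rw [Fintype.card_sigma, sum_univ_ordering] at h
  omega

lemma card_fiber_compare_rankBy (hkey : Injective key) {c : τ → Ordering} {x : τ}
    (hc : ∀ w, c w = .eq ↔ w = x) (o : Ordering) :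
    Fintype.card {w // c w = o} =
      Fintype.card {w // compare (rankBy key w) (Fintype.card {w // c w = .lt}) = o} := by
  obtain ⟨b, hb_def⟩ : ∃ b, Fintype.card {w // c w = .lt} = b := ⟨_, rfl⟩
  have hb : b < Fintype.card τ :=
    hb_def ▸ Fintype.card_subtype_lt (x := x) (by rw [(hc x).2 rfl]; decide)
  have hfin : ∀ o, Fintype.card {w // compare (rankBy key w) b = o} =
      Fintype.card {i : Fin (Fintype.card τ) // compare (i : ℕ) b = o} := fun o =>
    Fintype.card_congr ((rankEquiv hkey).subtypeEquiv fun w => Iff.rfl)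
  have hlt : Fintype.card {w // c w = .lt} =
      Fintype.card {w // compare (rankBy key w) b = .lt} := by
    rw [hfin, hb_def]
    simp only [compare_lt_iff_lt]
    rw [Fintype.card_subtype, Fin.card_filter_val_lt]
    omega
  have heq : Fintype.card {w // c w = .eq} =
      Fintype.card {w // compare (rankBy key w) b = .eq} := by
    rw [hfin]
    simp only [compare_eq_iff_eq, hc]
    rw [Fintype.card_subtype_eq, ← Fintype.card_subtype_eq (⟨b, hb⟩ : Fin _)]
    exact Fintype.card_congr (Equiv.subtypeEquivRight fun i => Fin.ext_iff)
  rw [hb_def]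
  cases o
  · exact hlt
  · exact heq
  · rw [card_fiber_gt, card_fiber_gt, hlt, heq]

lemma compare_key_perm_iff (hkey : Injective key) {c : τ → Ordering} {x : τ} (hc : c x = .eq)
    (ρ : Perm τ) :
    (∀ w, compare (key (ρ w)) (key (ρ x)) = c w) ↔
      (fun w => compare (rankBy key w) (Fintype.card {w // c w = .lt})) ∘ ρ = c := by
  have hq : rankBy key (ρ x) = Fintype.card {w // c w = .lt} → ∀ w,
      compare (rankBy key (ρ w)) (Fintype.card {w // c w = .lt}) =
        compare (key (ρ w)) (key (ρ x)) := fun hρ w => by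
    rw [← compare_rankBy hkey, hρ]
  refine ⟨fun h => ?_, fun h => ?_⟩
  · have hρx : rankBy key (ρ x) = Fintype.card {w // c w = .lt} := by
      rw [rankBy, Fintype.card_subtype]
      refine card_equiv ρ.symm fun w => ?_
      simp [← h, compare_lt_iff_lt]
    exact funext fun w => (hq hρx w).trans (h w)
  · have hρx : rankBy key (ρ x) = Fintype.card {w // c w = .lt} :=
      compare_eq_iff_eq.1 <| (congrFun h x).trans hc
    exact fun w => (hq hρx w).symm.trans (congrFun h w)

variable [DecidableEq τ]

lemma card_perm_comp_eq {ι : Type*} [Fintype ι] [DecidableEq ι] (q c : τ → ι)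
    (h : ∀ i, Fintype.card {w // c w = i} = Fintype.card {w // q w = i}) :
    Fintype.card {ρ : Perm τ // q ∘ ρ = c} = ∏ i, (Fintype.card {w // c w = i})! := by
  set ρ₀ : Perm τ := ofFiberEquiv fun i => Fintype.equivOfCardEq (h i)
  have hρ₀ : ∀ w, q (ρ₀ w) = c w := ofFiberEquiv_map _
  rw [← DomMulAct.stabilizer_card c]
  refine Fintype.card_congr (subtypeEquiv (Equiv.mulLeft ρ₀⁻¹) fun ρ => ?_)
  have hcomp : c ∘ ⇑(ρ₀⁻¹ * ρ) = q ∘ ρ := funext fun w => by simp [← hρ₀]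
  rw [Equiv.coe_mulLeft, hcomp]

theorem card_perm_compare_key_eq (hkey : Injective key) (c : τ → Ordering) (x : τ)
    (hc : ∀ w, c w = .eq ↔ w = x) :
    Fintype.card {ρ : Perm τ // ∀ w, compare (key (ρ w)) (key (ρ x)) = c w} =
      ∏ o, (Fintype.card {w // c w = o})! := by
  rw [Fintype.card_congr (subtypeEquivRight (compare_key_perm_iff hkey ((hc x).2 rfl)))]
  exact card_perm_comp_eq _ c (card_fiber_compare_rankBy hkey hc)

end Rank

def splitClass {α : Type*} [DecidableEq α] (B A : Finset α) (w : α) : Ordering :=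
  if w ∈ B then .lt else if w ∈ A then .gt else .eq

section SplitClass
variable {α : Type*} [DecidableEq α] {B A : Finset α} {w : α}

lemma splitClass_eq_lt_iff : splitClass B A w = .lt ↔ w ∈ B := by
  unfold splitClass; split_ifs <;> simp_all

lemma splitClass_eq_gt_iff (hBA : Disjoint B A) : splitClass B A w = .gt ↔ w ∈ A := by
  unfold splitClass
  split_ifs with hB
  · simpa using disjoint_left.1 hBA hB
  all_goals simp_all

lemma splitClass_eq_eq_iff : splitClass B A w = .eq ↔ w ∉ B ∧ w ∉ A := by
  unfold splitClass; split_ifs <;> simp_all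

end SplitClass

section Orderings
variable {α β : Type*} [Fintype α] [DecidableEq α] [Fintype β] [LinearOrder β]

theorem card_equiv_compare_mul_factorial (T : Finset α) (c : T → Ordering) (x : T)
    (hc : ∀ w, c w = .eq ↔ w = x) :
    Fintype.card {p : α ≃ β // ∀ w : T, compare (p w) (p x) = c w} * (#T)! =
      Fintype.card (α ≃ β) * ∏ o, (Fintype.card {w // c w = o})! := by
  set Good : (α ≃ β) → Prop := fun p => ∀ w : T, compare (p w) (p x) = c w
  have hshift : ∀ π : Perm T,
      Fintype.card {p // Good ((Perm.ofSubtype π).trans p)} = Fintype.card {p // Good p} :=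
    fun π => Fintype.card_congr <|
      (equivCongr (Perm.ofSubtype π).symm (Equiv.refl β)).subtypeEquiv fun p => by
        simp [Good, equivCongr_apply_apply]
  have hfiber : ∀ p : α ≃ β, Fintype.card {π : Perm T // Good ((Perm.ofSubtype π).trans p)} =
      ∏ o, (Fintype.card {w // c w = o})! := fun p => by
    simp only [Good, Equiv.trans_apply, Perm.ofSubtype_apply_coe]
    exact card_perm_compare_key_eq (key := fun w : T => p w)
      (p.injective.comp Subtype.val_injective) c x hc
  calc Fintype.card {p // Good p} * (#T)!
      = ∑ π : Perm T, Fintype.card {p // Good ((Perm.ofSubtype π).trans p)} := by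
        simp [hshift, Fintype.card_perm, mul_comm]
    _ = ∑ p : α ≃ β, Fintype.card {π : Perm T // Good ((Perm.ofSubtype π).trans p)} := by
        simp only [Fintype.card_subtype, card_filter]
        exact Finset.sum_comm
    _ = Fintype.card (α ≃ β) * ∏ o, (Fintype.card {w // c w = o})! := by
        simp [hfiber]

theorem card_equiv_lt_lt_mul_factorial {x : α} {B A : Finset α} (hxB : x ∉ B) (hxA : x ∉ A)
    (hBA : Disjoint B A) :
    Fintype.card {p : α ≃ β // (∀ y ∈ B, p y < p x) ∧ ∀ z ∈ A, p x < p z} * (#B + #A + 1)! =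
      Fintype.card (α ≃ β) * ((#B)! * (#A)!) := by
  set T := insert x (B ∪ A)
  have hBT : B ⊆ T := subset_union_left.trans (subset_insert _ _)
  have hAT : A ⊆ T := subset_union_right.trans (subset_insert _ _)
  have hT : #T = #B + #A + 1 := by
    rw [card_insert_of_notMem (by simp [hxB, hxA]), card_union_of_disjoint hBA]
  set c : T → Ordering := fun w => splitClass B A w
  have hc_lt : ∀ w, c w = .lt ↔ (w : α) ∈ B := fun _ => splitClass_eq_lt_iff
  have hc_gt : ∀ w, c w = .gt ↔ (w : α) ∈ A := fun _ => splitClass_eq_gt_iff hBA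
  have hc_eq : ∀ w, c w = .eq ↔ w = ⟨x, mem_insert_self _ _⟩ := fun ⟨w, hw⟩ => by
    simp only [c, splitClass_eq_eq_iff, Subtype.mk.injEq]
    refine ⟨fun ⟨hB, hA⟩ => ?_, fun h => h ▸ ⟨hxB, hxA⟩⟩
    simpa [T, hB, hA] using hw
  have hgood : ∀ p : α ≃ β, (∀ w : T, compare (p w) (p x) = c w) ↔
      (∀ y ∈ B, p y < p x) ∧ ∀ z ∈ A, p x < p z := by
    refine fun p => ⟨fun h => ⟨fun y hy => ?_, fun z hz => ?_⟩, fun ⟨hB, hA⟩ ⟨w, hw⟩ => ?_⟩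
    · simpa [(hc_lt ⟨y, hBT hy⟩).2 hy, compare_lt_iff_lt] using h ⟨y, hBT hy⟩
    · simpa [(hc_gt ⟨z, hAT hz⟩).2 hz, compare_gt_iff_gt] using h ⟨z, hAT hz⟩
    rcases mem_insert.1 hw with rfl | hw
    · rw [(hc_eq _).2 rfl, compare_eq_iff_eq]
    rcases mem_union.1 hw with hwB | hwA
    · rw [(hc_lt ⟨w, _⟩).2 hwB, compare_lt_iff_lt]; exact hB w hwB
    · rw [(hc_gt ⟨w, _⟩).2 hwA, compare_gt_iff_gt]; exact hA w hwA
  have hprod : ∏ o, (Fintype.card {w // c w = o})! = (#B)! * (#A)! := by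
    rw [prod_univ_ordering, Fintype.card_congr (subtypeEquivRight hc_lt),
      Fintype.card_congr (subtypeEquivRight hc_eq), Fintype.card_congr (subtypeEquivRight hc_gt),
      card_subtype_coe_mem hBT, card_subtype_coe_mem hAT, Fintype.card_subtype_eq]
    simp
  rw [← hT, ← hprod, ← card_equiv_compare_mul_factorial T c _ hc_eq]
  exact congrArg (· * _) (Fintype.card_congr (subtypeEquivRight hgood)).symm

end Orderings

section DegIn
variable {V : Type*} [DecidableEq V] {s t : Finset (Sym2 V)} {w : V}

lemma degIn_mono (h : s ⊆ t) (w : V) : degIn s w ≤ degIn t w :=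
  card_le_card (filter_subset_filter _ h)

lemma degIn_lt_degIn {e : Sym2 V} (h : s ⊆ t) (het : e ∈ t) (hes : e ∉ s) (hwe : w ∈ e) :
    degIn s w < degIn t w :=
  card_lt_card <| (ssubset_iff_of_subset (filter_subset_filter _ h)).2
    ⟨e, mem_filter.2 ⟨het, hwe⟩, fun h' => hes (mem_filter.1 h').1⟩

lemma degIn_edgeFinset (G : SimpleGraph V) [Fintype V] [DecidableRel G.Adj] (w : V) :
    degIn G.edgeFinset w = G.degree w := by
  rw [degIn, ← SimpleGraph.incidenceFinset_eq_filter, SimpleGraph.card_incidenceFinset_eq_degree]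

lemma degIn_sdiff (h : t ⊆ s) (w : V) : degIn (s \ t) w = degIn s w - degIn t w := by
  rw [degIn, degIn, degIn, ← card_sdiff_of_subset (filter_subset_filter _ h)]
  congr 1
  ext e
  simp only [mem_filter, mem_sdiff]
  tauto

lemma card_filter_mem_or_mem {u v : V} (huv : u ≠ v) (ht : s(u, v) ∉ t) :
    #(t.filter fun e => u ∈ e ∨ v ∈ e) = degIn t u + degIn t v := by
  rw [filter_or, card_union_of_disjoint, degIn, degIn]
  refine disjoint_filter.2 fun e he hu hv => ht ?_
  rwa [← (Sym2.mem_and_mem_iff huv).1 ⟨hu, hv⟩]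

end DegIn

section Prefix
variable {V : Type*} [DecidableEq V] {s : Finset (Sym2 V)} (ω : Fin s.card ≃ {e : Sym2 V // e ∈ s})

lemma mem_prefixEdges {e : Sym2 V} {i : ℕ} :
    e ∈ prefixEdges ω i ↔ ∃ he : e ∈ s, (ω.symm ⟨e, he⟩ : ℕ) < i := by
  simp only [prefixEdges, mem_image, mem_filter, mem_univ, true_and]
  constructor
  · rintro ⟨j, hj, rfl⟩
    exact ⟨(ω j).2, by simpa using hj⟩
  · rintro ⟨he, hlt⟩
    exact ⟨ω.symm ⟨e, he⟩, hlt, by simp⟩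

lemma coe_mem_prefixEdges {y : {e // e ∈ s}} {i : ℕ} :
    (y : Sym2 V) ∈ prefixEdges ω i ↔ (ω.symm y : ℕ) < i := by
  simp [mem_prefixEdges]

lemma prefixEdges_mono {i j : ℕ} (hij : i ≤ j) : prefixEdges ω i ⊆ prefixEdges ω j := by
  intro e he
  obtain ⟨hes, hlt⟩ := (mem_prefixEdges ω).1 he
  exact (mem_prefixEdges ω).2 ⟨hes, hlt.trans_le hij⟩

lemma stopIndex_eq [Fintype V] {δ K : ℕ} (hK : ∀ w, δ ≤ degIn (prefixEdges ω K) w)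
    (hlt : ∀ i < K, ∃ w, degIn (prefixEdges ω i) w < δ) : stopIndex δ ω = K :=
  le_antisymm (Nat.sInf_le hK) <| le_csInf ⟨K, hK⟩ fun i hi => not_lt.1 fun h => by
    obtain ⟨w, hw⟩ := hlt i h
    exact (hi w).not_gt hw

end Prefix

section Event
variable {V : Type*} [Fintype V] [DecidableEq V] {s R : Finset (Sym2 V)} {δ : ℕ} {u v : V}

lemma order_of_lastEdgeIs (ω : Fin s.card ≃ {e : Sym2 V // e ∈ s}) (hRs : R ⊆ s)
    (huv : s(u, v) ∈ R) (hR : ∀ w, degIn R w = δ)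
    (hsub : R ⊆ finalEdges δ ω) (hlast : lastEdgeIs δ ω s(u, v))
    (hu : degIn (finalEdges δ ω) u = δ) (hv : degIn (finalEdges δ ω) v = δ) :
    (∀ y ∈ (R.erase s(u, v)).subtype (· ∈ s), ω.symm y < ω.symm ⟨s(u, v), hRs huv⟩) ∧
      ∀ z ∈ ((s \ R).filter fun e => u ∈ e ∨ v ∈ e).subtype (· ∈ s),
        ω.symm ⟨s(u, v), hRs huv⟩ < ω.symm z := by
  set x : {e // e ∈ s} := ⟨s(u, v), hRs huv⟩
  have hx : (ω.symm x : ℕ) + 1 = stopIndex δ ω := by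
    have h1 := (coe_mem_prefixEdges ω (y := x)).1 hlast.1
    have h2 := mt (coe_mem_prefixEdges ω (y := x)).2 hlast.2
    omega
  have hfinal : ∀ y : {e // e ∈ s}, (y : Sym2 V) ∈ finalEdges δ ω ↔ ω.symm y ≤ ω.symm x := by
    intro y
    rw [finalEdges, coe_mem_prefixEdges, ← hx, Fin.le_def]
    omega
  refine ⟨fun y hy => ?_, fun z hz => ?_⟩
  · obtain ⟨hyx, hyR⟩ := mem_erase.1 (mem_subtype.1 hy)
    refine lt_of_le_of_ne ((hfinal y).1 (hsub hyR)) fun h => hyx ?_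
    exact congrArg Subtype.val (ω.symm.injective h)
  · obtain ⟨hzR, hzuv⟩ := mem_filter.1 (mem_subtype.1 hz)
    -- an edge of `A` inside `G_ω` would lift `u` or `v` above the degree `δ` it has from `R`
    refine lt_of_not_ge fun hle => ?_
    have hzF := (hfinal z).2 hle
    rcases hzuv with hw | hw
    · exact (degIn_lt_degIn hsub hzF (mem_sdiff.1 hzR).2 hw).ne' (hu.trans (hR u).symm)
    · exact (degIn_lt_degIn hsub hzF (mem_sdiff.1 hzR).2 hw).ne' (hv.trans (hR v).symm)

lemma lastEdgeIs_of_order (ω : Fin s.card ≃ {e : Sym2 V // e ∈ s}) (hRs : R ⊆ s)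
    (huv : s(u, v) ∈ R) (hR : ∀ w, degIn R w = δ)
    (hB : ∀ y ∈ (R.erase s(u, v)).subtype (· ∈ s), ω.symm y < ω.symm ⟨s(u, v), hRs huv⟩)
    (hA : ∀ z ∈ ((s \ R).filter fun e => u ∈ e ∨ v ∈ e).subtype (· ∈ s),
      ω.symm ⟨s(u, v), hRs huv⟩ < ω.symm z) :
    R ⊆ finalEdges δ ω ∧ lastEdgeIs δ ω s(u, v) ∧
      degIn (finalEdges δ ω) u = δ ∧ degIn (finalEdges δ ω) v = δ := by
  set x : {e // e ∈ s} := ⟨s(u, v), hRs huv⟩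
  set K := (ω.symm x : ℕ) + 1
  have hxK : s(u, v) ∈ prefixEdges ω K := (coe_mem_prefixEdges ω (y := x)).2 (Nat.lt_succ_self _)
  have hRK : R ⊆ prefixEdges ω K := fun e he => by
    by_cases hex : e = s(u, v)
    · exact hex ▸ hxK
    · have hlt := hB ⟨e, hRs he⟩ (mem_subtype.2 (mem_erase.2 ⟨hex, he⟩))
      exact (coe_mem_prefixEdges ω (y := ⟨e, hRs he⟩)).2 (Nat.lt_succ_of_lt hlt)
  have hdegK : ∀ w ∈ s(u, v), degIn (prefixEdges ω K) w = δ := by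
    refine fun w hw => le_antisymm ?_ (hR w ▸ degIn_mono hRK w)
    refine hR w ▸ card_le_card fun e he => ?_
    obtain ⟨heK, hwe⟩ := mem_filter.1 he
    obtain ⟨hes, hlt⟩ := (mem_prefixEdges ω).1 heK
    refine mem_filter.2 ⟨by_contra fun heR => ?_, hwe⟩
    have hgt := hA ⟨e, hes⟩ <| mem_subtype.2 <| mem_filter.2
      ⟨mem_sdiff.2 ⟨hes, heR⟩, by rcases Sym2.mem_iff.1 hw with rfl | rfl <;> simp [hwe]⟩
    exact absurd hlt (not_lt.2 (Nat.succ_le_of_lt hgt))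
  have hstop : stopIndex δ ω = K := by
    refine stopIndex_eq ω (fun w => hR w ▸ degIn_mono hRK w) fun i hi => ⟨u, ?_⟩
    rw [← hdegK u (Sym2.mem_mk_left u v)]
    refine degIn_lt_degIn (prefixEdges_mono ω hi.le) hxK (fun hxi => ?_) (Sym2.mem_mk_left u v)
    exact absurd ((coe_mem_prefixEdges ω (y := x)).1 hxi) (not_lt.2 (Nat.le_of_lt_succ hi))
  rw [finalEdges, lastEdgeIs, hstop, Nat.add_sub_cancel]
  refine ⟨hRK, ⟨hxK, fun h => ?_⟩, hdegK u (Sym2.mem_mk_left u v), hdegK v (Sym2.mem_mk_right u v)⟩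
  exact lt_irrefl _ ((coe_mem_prefixEdges ω (y := x)).1 h)

theorem lastEdgeIs_and_degIn_iff (ω : Fin s.card ≃ {e : Sym2 V // e ∈ s}) (hRs : R ⊆ s)
    (huv : s(u, v) ∈ R) (hR : ∀ w, degIn R w = δ) :
    (R ⊆ finalEdges δ ω ∧ lastEdgeIs δ ω s(u, v) ∧
      degIn (finalEdges δ ω) u = δ ∧ degIn (finalEdges δ ω) v = δ) ↔
    (∀ y ∈ (R.erase s(u, v)).subtype (· ∈ s), ω.symm y < ω.symm ⟨s(u, v), hRs huv⟩) ∧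
      ∀ z ∈ ((s \ R).filter fun e => u ∈ e ∨ v ∈ e).subtype (· ∈ s),
        ω.symm ⟨s(u, v), hRs huv⟩ < ω.symm z :=
  ⟨fun ⟨h₁, h₂, h₃, h₄⟩ => order_of_lastEdgeIs ω hRs huv hR h₁ h₂ h₃ h₄,
    fun ⟨h₁, h₂⟩ => lastEdgeIs_of_order ω hRs huv hR h₁ h₂⟩

theorem card_lastEdgeIs_and_degIn_mul_factorial (hRs : R ⊆ s) (huv : s(u, v) ∈ R)
    (hR : ∀ w, degIn R w = δ) (hne : u ≠ v) :
    Nat.card {ω : Fin s.card ≃ {e : Sym2 V // e ∈ s} // R ⊆ finalEdges δ ω ∧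
        lastEdgeIs δ ω s(u, v) ∧ degIn (finalEdges δ ω) u = δ ∧ degIn (finalEdges δ ω) v = δ} *
        (#R + (degIn s u - δ) + (degIn s v - δ))! =
      (#s)! * ((#R - 1)! * ((degIn s u - δ) + (degIn s v - δ))!) := by
  set B := (R.erase s(u, v)).subtype (· ∈ s)
  set A := ((s \ R).filter fun e => u ∈ e ∨ v ∈ e).subtype (· ∈ s)
  have hB : #B = #R - 1 := by
    rw [card_subtype, filter_true_of_mem fun e he => hRs (mem_of_mem_erase he),
      card_erase_of_mem huv]
  have hA : #A = (degIn s u - δ) + (degIn s v - δ) := by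
    rw [card_subtype, filter_true_of_mem fun e he => (mem_sdiff.1 (mem_filter.1 he).1).1,
      card_filter_mem_or_mem hne fun h => (mem_sdiff.1 h).2 huv, degIn_sdiff hRs,
      degIn_sdiff hRs, hR, hR]
  have hBA : Disjoint B A := disjoint_left.2 fun y hyB hyA =>
    (mem_sdiff.1 (mem_filter.1 (mem_subtype.1 hyA)).1).2 (mem_of_mem_erase (mem_subtype.1 hyB))
  have hcount := card_equiv_lt_lt_mul_factorial (β := Fin s.card) (x := ⟨s(u, v), hRs huv⟩)
    (by simp [B]) (by simp [A, huv]) hBA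
  rw [Fintype.card_equiv s.equivFin, Fintype.card_coe, hB, hA] at hcount
  have hR₀ : 0 < #R := card_pos.2 ⟨_, huv⟩
  rw [show #R + (degIn s u - δ) + (degIn s v - δ) = #R - 1 + (degIn s u - δ + (degIn s v - δ)) + 1
    by omega, ← hcount, ← Nat.card_eq_fintype_card]
  congr 1
  exact Nat.card_congr <|
    (symmEquiv _ _).subtypeEquiv fun ω => lastEdgeIs_and_degIn_iff ω hRs huv hR

end Event

theorem probability_subgraph_last_edge_and_both_low_degree_general
    {V : Type*} [Fintype V] [DecidableEq V]
    (G J : SimpleGraph V) [DecidableRel G.Adj] [DecidableRel J.Adj]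
    (δ : ℕ)
    (hJG : J ≤ G) (hJ : J.IsRegularOfDegree δ)
    (u v : V) (huv : J.Adj u v) (h : ℕ) (hh : h = J.edgeFinset.card) :
    ({ω : Fin G.edgeFinset.card ≃ {e : Sym2 V // e ∈ G.edgeFinset} |
        J.edgeSet ⊆ ↑(finalEdges δ ω) ∧ lastEdgeIs δ ω s(u, v) ∧
          degIn (finalEdges δ ω) u = δ ∧ degIn (finalEdges δ ω) v = δ}.ncard : ℝ) /
      (Fintype.card (Fin G.edgeFinset.card ≃ {e : Sym2 V // e ∈ G.edgeFinset}) : ℝ) =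
    ((h - 1).factorial : ℝ) * (((G.degree u - δ) + (G.degree v - δ)).factorial : ℝ) /
      ((h + (G.degree u - δ) + (G.degree v - δ)).factorial : ℝ) := by
  have hRs : J.edgeFinset ⊆ G.edgeFinset := SimpleGraph.edgeFinset_subset_edgeFinset.2 hJG
  have hR : ∀ w, degIn J.edgeFinset w = δ := fun w => (degIn_edgeFinset J w).trans (hJ w)
  have hcount := card_lastEdgeIs_and_degIn_mul_factorial hRs (SimpleGraph.mem_edgeFinset.2 huv)
    hR huv.ne
  rw [degIn_edgeFinset, degIn_edgeFinset, ← hh] at hcount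
  simp only [← SimpleGraph.coe_edgeFinset, coe_subset]
  rw [← Nat.card_coe_set_eq, Set.coe_ofPred, Fintype.card_equiv G.edgeFinset.equivFin.symm,
    Fintype.card_fin, div_eq_div_iff (by positivity) (by positivity)]
  exact_mod_cast hcount.trans (mul_comm _ _)

/-- Let `G` be a finite simple graph with minimum degree at least `δ ≥ 1`, let `J` be a
`δ`-regular spanning subgraph of `G` with `h` edges, and let `uv` be an edge of `J`;
write `Δ(w) = deg_G(w) − δ`.  The probability that `J ⊆ G_ω`, `e_{k(ω)} = uv`, and both
`u` and `v` have degree exactly `δ` in `G_ω` equals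
`(h−1)!·(Δ(u)+Δ(v))!/(h+Δ(u)+Δ(v))!`. -/
theorem probability_subgraph_last_edge_and_both_low_degree
    {V : Type*} [Fintype V] [DecidableEq V]
    (G J : SimpleGraph V) [DecidableRel G.Adj] [DecidableRel J.Adj]
    (δ : ℕ) (hδ : 1 ≤ δ) (hGdeg : ∀ w : V, δ ≤ G.degree w)
    (hJG : J ≤ G) (hJ : J.IsRegularOfDegree δ)
    (u v : V) (huv : J.Adj u v) (h : ℕ) (hh : h = J.edgeFinset.card) :
    ({ω : Fin G.edgeFinset.card ≃ {e : Sym2 V // e ∈ G.edgeFinset} |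
        J.edgeSet ⊆ ↑(finalEdges δ ω) ∧ lastEdgeIs δ ω s(u, v) ∧
          degIn (finalEdges δ ω) u = δ ∧ degIn (finalEdges δ ω) v = δ}.ncard : ℝ) /
      (Fintype.card (Fin G.edgeFinset.card ≃ {e : Sym2 V // e ∈ G.edgeFinset}) : ℝ) =
    ((h - 1).factorial : ℝ) * (((G.degree u - δ) + (G.degree v - δ)).factorial : ℝ) /
      ((h + (G.degree u - δ) + (G.degree v - δ)).factorial : ℝ) :=
  probability_subgraph_last_edge_and_both_low_degree_general G J δ hJG hJ u v huv h hh
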